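/- arXiv:2102.12079 — 3 statements merged into one kernel-verified Lean document; each statement's English description precedes it below -/
import Mathlib

section
/- For every integer j ≥ 1 and every g ≥ 0, k_j(g) ≤ (1+j)·log(1+j) / ((g+1+j)·log(g+1+j)), where k_j(g) = 1 - log(g+1)/log(g+1+j). -/
open MeasureTheory Real Set

/-- The sequence `k_j(g) = 1 - log(g+1)/log(g+1+j)`. -/
noncomputable def kfun (j : ℕ) (g : ℝ) : ℝ :=
  1 - Real.log (g + 1) / Real.log (g + 1 + (j : ℝ))

/-!
Since `1 - log a / log (a + j) = (log (a + j) - log a) / log (a + j)`, the bound amounts to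
`(a + j) log ((a + j) / a) ≤ (1 + j) log (1 + j)` for `a = g + 1 ≥ 1`. This holds because
`a ↦ (a + b) log ((a + b) / a)`, the logarithm of `(1 + b / a) ^ (a + b)`, is antitone on `a > 0`:
its derivative `log ((a + b) / a) - ((a + b) / a - 1)` is nonpositive by `log x ≤ x - 1`.
-/

section

variable {a b : ℝ}

lemma hasDerivAt_add_mul_log_add_sub_log (ha : 0 < a) (hab : 0 < a + b) :
    HasDerivAt (fun x => (x + b) * (log (x + b) - log x))
      (log (a + b) - log a - ((a + b) / a - 1)) a := by
  have hshift : HasDerivAt (fun x => x + b) 1 a := (hasDerivAt_id a).add_const b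
  refine (hshift.mul ((hshift.log hab.ne').sub (hasDerivAt_log ha.ne'))).congr_deriv ?_
  simp only [Pi.sub_apply]
  field_simp
  ring

lemma antitoneOn_add_mul_log_add_sub_log (hb : 0 ≤ b) :
    AntitoneOn (fun x => (x + b) * (log (x + b) - log x)) (Ioi 0) := by
  have hderiv : ∀ x ∈ Ioi (0 : ℝ), HasDerivAt (fun x => (x + b) * (log (x + b) - log x))
      (log (x + b) - log x - ((x + b) / x - 1)) x := fun x hx =>
    hasDerivAt_add_mul_log_add_sub_log hx (add_pos_of_pos_of_nonneg hx hb)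
  refine antitoneOn_of_deriv_nonpos (convex_Ioi 0)
    (fun x hx => (hderiv x hx).continuousAt.continuousWithinAt) ?_ ?_
  · rw [interior_Ioi]
    exact fun x hx => (hderiv x hx).differentiableAt.differentiableWithinAt
  · rw [interior_Ioi]
    intro x hx
    have hx0 : 0 < x := hx
    rw [(hderiv x hx).deriv, ← log_div (by positivity) hx0.ne', sub_nonpos]
    exact log_le_sub_one_of_pos (by positivity)

lemma add_mul_log_add_sub_log_le (ha : 1 ≤ a) (hb : 0 ≤ b) :
    (a + b) * (log (a + b) - log a) ≤ (1 + b) * log (1 + b) := by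
  simpa using antitoneOn_add_mul_log_add_sub_log hb (mem_Ioi.2 one_pos)
    (mem_Ioi.2 (by linarith)) ha

end

/-- For `j ≥ 1` and `g ≥ 0`,
`k_j(g) ≤ (1+j) log(1+j) / ((g+1+j) log(g+1+j))`. -/
theorem kfun_upper_bound (j : ℕ) (hj : 1 ≤ j) (g : ℝ) (hg : 0 ≤ g) :
    kfun j g ≤ (1 + (j : ℝ)) * Real.log (1 + (j : ℝ)) /
      ((g + 1 + (j : ℝ)) * Real.log (g + 1 + (j : ℝ))) := by
  have hj' : (1 : ℝ) ≤ j := by exact_mod_cast hj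
  have hlog_pos : 0 < log (g + 1 + j) := log_pos (by linarith)
  have hkey := add_mul_log_add_sub_log_le (by linarith : 1 ≤ g + 1) j.cast_nonneg
  rw [kfun, one_sub_div hlog_pos.ne', div_le_div_iff₀ hlog_pos (by positivity)]
  linarith [mul_le_mul_of_nonneg_right hkey hlog_pos.le]
end

section
/- Let a ≥ -2 and b > -1, and let π(g) = (g+1)^{-(a+2)}(g/(g+1))^b. Then for every integer j ≥ 1, ∫_0^∞ π(g) k_j(g)² dg ≤ 1/(b+1) + max(1, 2^{-b})·(1+j). -/
open MeasureTheory Real Set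

/-- The prior `π(g) = (g+1)^{-(a+2)} (g/(g+1))^b`. -/
noncomputable def priorPi (a b g : ℝ) : ℝ :=
  (g + 1) ^ (-(a + 2)) * (g / (g + 1)) ^ b

/-!
Since `a ≥ -2` and `b > -1`, the prior satisfies `π(g) ≤ g^b (g + 1)` for `g > 0` and `π(g) ≤ M := max(1, 2^{-b})`
for `g ≥ 1`, while `0 ≤ k_j ≤ 1` and, by concavity of `log`, `k_j(g) ≤ (1 + j)/(g + 1 + j)`.
So the integral over `(0, 1]` is at most `1/(b+1) + 1/(b+2)` and the one over `(1, ∞)` at most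
`M (1 + j)^2/(2 + j) = M (1 + j) - M (1 + j)/(2 + j)`. For `j ≥ 1` the slack `M (1 + j)/(2 + j)` is
at least `2M/3`, which absorbs `1/(b+2)`: trivially for `b ≥ 0`, and for `b < 0` because
`2^{-b} ≥ 1 - b/2`.
-/

open Filter Topology

lemma kfun_nonneg (j : ℕ) {g : ℝ} (hg : 0 ≤ g) : 0 ≤ kfun j g := by
  have hle : log (g + 1) ≤ log (g + 1 + j) := log_le_log (by linarith) (by linarith)
  have := div_le_one_of_le₀ hle ((log_nonneg (by linarith)).trans hle)
  rw [kfun]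
  linarith

lemma kfun_le_one (j : ℕ) {g : ℝ} (hg : 0 ≤ g) : kfun j g ≤ 1 := by
  have := div_nonneg (log_nonneg (by linarith : 1 ≤ g + 1))
    (log_nonneg (by linarith [j.cast_nonneg (α := ℝ)] : 1 ≤ g + 1 + j))
  rw [kfun]
  linarith

/-- Concavity of `log`: its secant slope over `[g + 1, g + 1 + j]` is at most that over
`[1, g + 1]`. -/
lemma kfun_le_div {j : ℕ} (hj : 0 < j) {g : ℝ} (hg : 0 < g) :
    kfun j g ≤ (1 + j) / (g + 1 + j) := by
  have hj' : (0 : ℝ) < j := Nat.cast_pos.mpr hj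
  have hslope := strictConcaveOn_log_Ioi.concaveOn.slope_anti_adjacent
    (x := 1) (y := g + 1) (z := g + 1 + j) (by simp) (by simp; positivity)
    (by linarith) (by linarith)
  rw [log_one, sub_zero, add_sub_cancel_right, add_sub_cancel_left,
    div_le_div_iff₀ hj' hg] at hslope
  have hlog : 0 < log (g + 1 + j) := log_pos (by linarith)
  rw [kfun, one_sub_div hlog.ne', div_le_div_iff₀ hlog (by positivity)]
  nlinarith [log_pos (by linarith : 1 < g + 1)]

lemma priorPi_nonneg (a b : ℝ) {g : ℝ} (hg : 0 ≤ g) : 0 ≤ priorPi a b g := by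
  unfold priorPi
  positivity

lemma priorPi_le_rpow_add_rpow {a b : ℝ} (ha : -2 ≤ a) (hb : -1 ≤ b) {g : ℝ} (hg : 0 < g) :
    priorPi a b g ≤ g ^ b + g ^ (b + 1) := by
  have hg1 : 0 < g + 1 := by linarith
  have hpow : (g + 1) ^ (-(a + 2) - b) ≤ g + 1 := by
    simpa using rpow_le_rpow_of_exponent_le (by linarith : 1 ≤ g + 1)
      (by linarith : -(a + 2) - b ≤ 1)
  calc priorPi a b g = g ^ b * (g + 1) ^ (-(a + 2) - b) := by
        rw [priorPi, div_rpow hg.le hg1.le, rpow_sub hg1]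
        ring
    _ ≤ g ^ b * (g + 1) := by gcongr
    _ = g ^ b + g ^ (b + 1) := by rw [rpow_add_one hg.ne']; ring

lemma rpow_le_max_one_two_rpow_neg (b : ℝ) {x : ℝ} (hx₀ : 1 / 2 ≤ x) (hx₁ : x ≤ 1) :
    x ^ b ≤ max 1 ((2 : ℝ) ^ (-b)) := by
  rcases le_or_gt 0 b with hb | hb
  · exact (rpow_le_one (by linarith) hx₁ hb).trans (le_max_left _ _)
  · calc x ^ b ≤ (1 / 2) ^ b := rpow_le_rpow_of_nonpos (by norm_num) hx₀ hb.le
      _ = 2 ^ (-b) := by rw [one_div, inv_rpow zero_le_two, rpow_neg zero_le_two]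
      _ ≤ _ := le_max_right _ _

lemma priorPi_le_max {a : ℝ} (ha : -2 ≤ a) (b : ℝ) {g : ℝ} (hg : 1 ≤ g) :
    priorPi a b g ≤ max 1 ((2 : ℝ) ^ (-b)) := by
  have hg1 : 0 < g + 1 := by linarith
  have hfactor : (g + 1) ^ (-(a + 2)) ≤ 1 :=
    rpow_le_one_of_one_le_of_nonpos (by linarith) (by linarith)
  have hratio : (g / (g + 1)) ^ b ≤ max 1 ((2 : ℝ) ^ (-b)) :=
    rpow_le_max_one_two_rpow_neg b (by rw [div_le_div_iff₀ two_pos hg1]; linarith)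
      (by rw [div_le_one hg1]; linarith)
  calc priorPi a b g ≤ 1 * (g / (g + 1)) ^ b := by
        unfold priorPi
        gcongr
    _ ≤ _ := by rwa [one_mul]

lemma intervalIntegrable_rpow_add_rpow {b : ℝ} (hb : -1 < b) :
    IntervalIntegrable (fun x : ℝ => x ^ b + x ^ (b + 1)) volume 0 1 :=
  (intervalIntegral.intervalIntegrable_rpow' hb).add
    (intervalIntegral.intervalIntegrable_rpow' (by linarith))

lemma integral_rpow_add_rpow {b : ℝ} (hb : -1 < b) :
    ∫ x in (0 : ℝ)..1, (x ^ b + x ^ (b + 1)) = 1 / (b + 1) + 1 / (b + 2) := by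
  rw [intervalIntegral.integral_add (intervalIntegral.intervalIntegrable_rpow' hb)
    (intervalIntegral.intervalIntegrable_rpow' (by linarith)), integral_rpow (Or.inl hb),
    integral_rpow (Or.inl (by linarith)), zero_rpow (by linarith), zero_rpow (by linarith)]
  norm_num
  ring

lemma hasDerivAt_neg_inv_add {m x : ℝ} (h : x + m ≠ 0) :
    HasDerivAt (fun y => -(y + m)⁻¹) ((x + m) ^ 2)⁻¹ x := by
  have h' := (((hasDerivAt_id x).add_const m).inv h).neg
  rwa [neg_div, neg_neg, one_div] at h'

lemma tendsto_neg_inv_add_atTop (m : ℝ) :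
    Tendsto (fun y : ℝ => -(y + m)⁻¹) atTop (𝓝 0) := by
  simpa using (tendsto_inv_atTop_zero.comp (tendsto_atTop_add_const_right _ m tendsto_id)).neg

lemma integrableOn_Ioi_inv_add_sq {c m : ℝ} (h : 0 < c + m) :
    IntegrableOn (fun x => ((x + m) ^ 2)⁻¹) (Ioi c) :=
  integrableOn_Ioi_deriv_of_nonneg' (fun x hx => hasDerivAt_neg_inv_add (by linarith [mem_Ici.mp hx]))
    (fun x _ => by positivity) (tendsto_neg_inv_add_atTop m)

lemma integral_Ioi_inv_add_sq {c m : ℝ} (h : 0 < c + m) :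
    ∫ x in Ioi c, ((x + m) ^ 2)⁻¹ = (c + m)⁻¹ := by
  rw [integral_Ioi_of_hasDerivAt_of_tendsto'
    (fun x hx => hasDerivAt_neg_inv_add (by linarith [mem_Ici.mp hx]))
    (integrableOn_Ioi_inv_add_sq h) (tendsto_neg_inv_add_atTop m)]
  ring

lemma one_add_half_mul_le_two_rpow {t : ℝ} (ht : 0 ≤ t) : 1 + t / 2 ≤ (2 : ℝ) ^ t := by
  rw [rpow_def_of_pos two_pos]
  nlinarith [add_one_le_exp (log 2 * t), log_two_gt_d9]

lemma one_div_add_two_le {b : ℝ} (hb : -1 ≤ b) :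
    1 / (b + 2) ≤ 2 / 3 * max 1 ((2 : ℝ) ^ (-b)) := by
  rw [div_le_iff₀ (by linarith)]
  rcases le_or_gt 0 b with hb₀ | hb₀
  · nlinarith [le_max_left 1 ((2 : ℝ) ^ (-b))]
  · nlinarith [one_add_half_mul_le_two_rpow (neg_nonneg.mpr hb₀.le),
      le_max_right 1 ((2 : ℝ) ^ (-b))]

lemma one_add_sq_div_two_add_add_two_thirds_le {x : ℝ} (hx : 1 ≤ x) :
    (1 + x) ^ 2 / (2 + x) + 2 / 3 ≤ 1 + x := by
  rw [← le_sub_iff_add_le, div_le_iff₀ (by linarith)]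
  nlinarith

lemma measurable_priorPi_mul_kfun_sq (a b : ℝ) (j : ℕ) :
    Measurable fun g => priorPi a b g * kfun j g ^ 2 := by
  unfold priorPi kfun
  fun_prop

lemma priorPi_mul_kfun_sq_le_rpow_add_rpow {a b : ℝ} (ha : -2 ≤ a) (hb : -1 ≤ b) (j : ℕ)
    {g : ℝ} (hg : 0 < g) : priorPi a b g * kfun j g ^ 2 ≤ g ^ b + g ^ (b + 1) :=
  calc priorPi a b g * kfun j g ^ 2 ≤ priorPi a b g * 1 := by
        gcongr
        · exact priorPi_nonneg a b hg.le
        · exact pow_le_one₀ (kfun_nonneg j hg.le) (kfun_le_one j hg.le)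
    _ ≤ g ^ b + g ^ (b + 1) := by
        rw [mul_one]
        exact priorPi_le_rpow_add_rpow ha hb hg

lemma priorPi_mul_kfun_sq_le_inv_add_sq {a : ℝ} (ha : -2 ≤ a) (b : ℝ) {j : ℕ} (hj : 0 < j)
    {g : ℝ} (hg : 1 ≤ g) :
    priorPi a b g * kfun j g ^ 2 ≤ max 1 ((2 : ℝ) ^ (-b)) * (1 + j) ^ 2 * ((g + (1 + j)) ^ 2)⁻¹ :=
  calc priorPi a b g * kfun j g ^ 2 ≤ max 1 ((2 : ℝ) ^ (-b)) * ((1 + j) / (g + 1 + j)) ^ 2 := by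
        gcongr
        · exact priorPi_le_max ha b hg
        · exact kfun_nonneg j (by linarith)
        · exact kfun_le_div hj (by linarith)
    _ = _ := by rw [div_pow, add_assoc]; ring

lemma priorPi_mul_kfun_sq_nonneg (a b : ℝ) (j : ℕ) {g : ℝ} (hg : 0 ≤ g) :
    0 ≤ priorPi a b g * kfun j g ^ 2 :=
  mul_nonneg (priorPi_nonneg a b hg) (sq_nonneg _)

lemma integrableOn_and_setIntegral_le {α : Type*} [MeasurableSpace α] {μ : Measure α}
    {f φ : α → ℝ} {s : Set α} (hs : MeasurableSet s) (hf : Measurable f)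
    (hφ : IntegrableOn φ s μ) (h₀ : ∀ x ∈ s, 0 ≤ f x) (hle : ∀ x ∈ s, f x ≤ φ x) :
    IntegrableOn f s μ ∧ ∫ x in s, f x ∂μ ≤ ∫ x in s, φ x ∂μ := by
  have hfs : IntegrableOn f s μ :=
    integrable_of_le_of_le hf.aestronglyMeasurable (ae_restrict_of_forall_mem hs h₀)
      (ae_restrict_of_forall_mem hs hle) (integrable_zero _ _ _) hφ
  exact ⟨hfs, setIntegral_mono_on hfs hφ hs hle⟩

lemma integrableOn_and_integral_Ioc_priorPi_mul_kfun_sq_le {a b : ℝ} (ha : -2 ≤ a)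
    (hb : -1 < b) (j : ℕ) :
    IntegrableOn (fun g => priorPi a b g * kfun j g ^ 2) (Ioc 0 1) ∧
      ∫ g in Ioc 0 1, priorPi a b g * kfun j g ^ 2 ≤ 1 / (b + 1) + 1 / (b + 2) := by
  rw [← integral_rpow_add_rpow hb, intervalIntegral.integral_of_le zero_le_one]
  exact integrableOn_and_setIntegral_le measurableSet_Ioc (measurable_priorPi_mul_kfun_sq a b j)
    ((intervalIntegrable_iff_integrableOn_Ioc_of_le zero_le_one).mp
      (intervalIntegrable_rpow_add_rpow hb))
    (fun g hg => priorPi_mul_kfun_sq_nonneg a b j hg.1.le)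
    (fun g hg => priorPi_mul_kfun_sq_le_rpow_add_rpow ha hb.le j hg.1)

lemma integrableOn_and_integral_Ioi_priorPi_mul_kfun_sq_le {a : ℝ} (ha : -2 ≤ a) (b : ℝ)
    {j : ℕ} (hj : 0 < j) :
    IntegrableOn (fun g => priorPi a b g * kfun j g ^ 2) (Ioi 1) ∧
      ∫ g in Ioi 1, priorPi a b g * kfun j g ^ 2 ≤
        max 1 ((2 : ℝ) ^ (-b)) * ((1 + j) ^ 2 / (2 + j)) := by
  have hval : ∫ g in Ioi (1 : ℝ), max 1 ((2 : ℝ) ^ (-b)) * (1 + j) ^ 2 * ((g + (1 + j)) ^ 2)⁻¹ =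
      max 1 ((2 : ℝ) ^ (-b)) * ((1 + j) ^ 2 / (2 + j)) := by
    rw [integral_const_mul, integral_Ioi_inv_add_sq (by positivity)]
    ring
  rw [← hval]
  exact integrableOn_and_setIntegral_le measurableSet_Ioi (measurable_priorPi_mul_kfun_sq a b j)
    ((integrableOn_Ioi_inv_add_sq (by positivity)).const_mul _)
    (fun g hg => priorPi_mul_kfun_sq_nonneg a b j (zero_le_one.trans (le_of_lt hg)))
    (fun g hg => priorPi_mul_kfun_sq_le_inv_add_sq ha b hj (le_of_lt hg))

/-- For `a ≥ -2`, `b > -1` and `j ≥ 1`,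
`∫_0^∞ π(g) k_j(g)² dg ≤ 1/(b+1) + max(1, 2^{-b}) (1+j)`. -/
theorem integral_priorPi_kfun_sq (a b : ℝ) (ha : -2 ≤ a) (hb : -1 < b)
    (j : ℕ) (hj : 1 ≤ j) :
    (∫ g in Ioi (0 : ℝ), priorPi a b g * (kfun j g) ^ 2)
      ≤ 1 / (b + 1) + max 1 ((2 : ℝ) ^ (-b)) * (1 + (j : ℝ)) := by
  obtain ⟨hint₁, hle₁⟩ := integrableOn_and_integral_Ioc_priorPi_mul_kfun_sq_le ha hb j
  obtain ⟨hint₂, hle₂⟩ := integrableOn_and_integral_Ioi_priorPi_mul_kfun_sq_le ha b hj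
  rw [← Ioc_union_Ioi_eq_Ioi zero_le_one,
    setIntegral_union Ioc_disjoint_Ioi_same measurableSet_Ioi hint₁ hint₂]
  have hM : 0 ≤ max 1 ((2 : ℝ) ^ (-b)) := zero_le_one.trans (le_max_left _ _)
  have htail := mul_le_mul_of_nonneg_left
    (one_add_sq_div_two_add_add_two_thirds_le (Nat.one_le_cast.mpr hj)) hM
  linarith [one_div_add_two_le hb.le]
end

section
/- For every integer j ≥ 1, ∫_0^∞ (g+1)·k_j'(g)² dg ≤ 5/log(1+j), where k_j(g) = 1 - log(g+1)/log(g+1+j) and k_j' is its derivative. -/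
/-!
Put `L = log (1 + j)` and `u = g + 1 + j`.
From `0 ≤ k_j ≤ 1`, `(a + k)² ≤ 2a² + 2` and `L ≤ log u`,
`(g + 1) k_j'(g)² ≤ (2 / L²) (1 / (g + 1) - 1 / u) + 2 / (u log² u) = -G'(g)`, where
`G g = (2 / L²) log (u / (g + 1)) + 2 / log u` decreases to `0`. Hence the integral is at most
`G 0 = 4 / L`.
-/

open MeasureTheory Real Set

/-- Its derivative `k_j'(g) = -(j/(g+1) + k_j(g)) / ((g+1+j) log(g+1+j))`. -/
noncomputable def kfun' (j : ℕ) (g : ℝ) : ℝ :=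
  -((j : ℝ) / (g + 1) + kfun j g) / ((g + 1 + (j : ℝ)) * Real.log (g + 1 + (j : ℝ)))

open Filter Topology

theorem integral_Ioi_le_of_le_neg_deriv {f G G' : ℝ → ℝ} {a l : ℝ}
    (hG : ∀ x ∈ Ici a, HasDerivAt G (G' x) x) (hGl : Tendsto G atTop (𝓝 l))
    (hf : ∀ x ∈ Ioi a, 0 ≤ f x) (hfG : ∀ x ∈ Ioi a, f x ≤ -G' x) :
    ∫ x in Ioi a, f x ≤ G a - l := by
  have hG' : ∀ x ∈ Ioi a, G' x ≤ 0 := fun x hx => by linarith [hf x hx, hfG x hx]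
  calc ∫ x in Ioi a, f x ≤ ∫ x in Ioi a, -G' x :=
        integral_mono_of_nonneg ((ae_restrict_iff' measurableSet_Ioi).2 (ae_of_all _ hf))
          (integrableOn_Ioi_deriv_of_nonpos' hG hG' hGl).neg
          ((ae_restrict_iff' measurableSet_Ioi).2 (ae_of_all _ hfG))
    _ = G a - l := by rw [integral_neg, integral_Ioi_of_hasDerivAt_of_nonpos' hG hG' hGl, neg_sub]

theorem kfun_mem_Icc (j : ℕ) {g : ℝ} (hg : 0 ≤ g) : kfun j g ∈ Icc 0 1 := by
  have hlog : 0 ≤ log (g + 1) := log_nonneg (by linarith)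
  have hlog_le : log (g + 1) ≤ log (g + 1 + j) :=
    log_le_log (by linarith) (by linarith [j.cast_nonneg (α := ℝ)])
  have hq : log (g + 1) / log (g + 1 + j) ≤ 1 := div_le_one_of_le₀ hlog_le (hlog.trans hlog_le)
  have hq' : 0 ≤ log (g + 1) / log (g + 1 + j) := div_nonneg hlog (hlog.trans hlog_le)
  exact ⟨by unfold kfun; linarith, by unfold kfun; linarith⟩

theorem mul_sq_kfun'_le {j : ℕ} (hj : 1 ≤ j) {g : ℝ} (hg : 0 ≤ g) :
    (g + 1) * kfun' j g ^ 2 ≤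
      2 / log (1 + j) ^ 2 * ((g + 1)⁻¹ - (g + 1 + j)⁻¹) +
        2 * ((g + 1 + j)⁻¹ / log (g + 1 + j) ^ 2) := by
  obtain ⟨hk0, hk1⟩ := kfun_mem_Icc j hg
  have hr : (1 : ℝ) ≤ j := by exact_mod_cast hj
  have hL : 0 < log (1 + j) := log_pos (by linarith)
  have hLlu : log (1 + j) ≤ log (g + 1 + j) := log_le_log (by linarith) (by linarith)
  unfold kfun'
  set x := g + 1
  set r : ℝ := (j : ℝ)
  set k := kfun j g
  set lu := log (x + r)
  have hx1 : 1 ≤ x := by linarith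
  calc x * (-(r / x + k) / ((x + r) * lu)) ^ 2 = x * (r / x + k) ^ 2 / ((x + r) ^ 2 * lu ^ 2) := by
        rw [neg_div, neg_sq, div_pow, mul_pow, mul_div_assoc]
    _ ≤ x * (2 * (r / x) ^ 2 + 2) / ((x + r) ^ 2 * lu ^ 2) := by
        gcongr; nlinarith [sq_nonneg (r / x - k)]
    _ = 2 * (r / (x + r)) * r / (x * (x + r) * lu ^ 2) +
          2 * ((x + r)⁻¹ / lu ^ 2) * (x / (x + r)) := by
        field_simp
    _ ≤ 2 * 1 * r / (x * (x + r) * log (1 + r) ^ 2) + 2 * ((x + r)⁻¹ / lu ^ 2) * 1 := by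
        gcongr
        · exact div_le_one_of_le₀ (by linarith) (by linarith)
        · exact div_le_one_of_le₀ (by linarith) (by linarith)
    _ = _ := by field_simp; ring

/-- `∫_0^∞ (g+1) k_j'(g)² dg ≤ 5 / log(1+j)`. -/
theorem integral_kfun_deriv_sq (j : ℕ) (hj : 1 ≤ j) :
    (∫ g in Ioi (0 : ℝ), (g + 1) * (kfun' j g) ^ 2) ≤ 5 / Real.log (1 + (j : ℝ)) := by
  set r : ℝ := (j : ℝ)
  have hr : (1 : ℝ) ≤ r := Nat.one_le_cast.mpr hj
  set L := log (1 + r)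
  have hL : 0 < L := log_pos (by linarith)
  set G : ℝ → ℝ := fun g =>
    2 / L ^ 2 * (log (g + 1 + r) - log (g + 1)) + 2 * (log (g + 1 + r))⁻¹
  have hG : ∀ g ∈ Ici (0 : ℝ), HasDerivAt G (2 / L ^ 2 * ((g + 1 + r)⁻¹ - (g + 1)⁻¹)
      + 2 * (-(g + 1 + r)⁻¹ / log (g + 1 + r) ^ 2)) g := by
    intro g (hg : 0 ≤ g)
    have hshift : HasDerivAt (fun g : ℝ => g + 1) 1 g := (hasDerivAt_id g).add_const 1
    have hlog := (hshift.add_const r).log (by linarith)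
    refine (((hlog.sub (hshift.log (by linarith))).const_mul (2 / L ^ 2)).add
      ((hlog.inv (log_pos (by linarith)).ne').const_mul 2)).congr_deriv ?_
    simp only [one_div]
  have hGlim : Tendsto G atTop (𝓝 0) := by
    have hshift : Tendsto (fun g : ℝ => g + 1) atTop atTop :=
      tendsto_atTop_add_const_right _ 1 tendsto_id
    have hlog : Tendsto (fun g : ℝ => log (g + 1 + r)) atTop atTop :=
      tendsto_log_atTop.comp (tendsto_atTop_add_const_right _ r hshift)
    simpa using ((tendsto_log_comp_add_sub_log r).comp hshift).const_mul (2 / L ^ 2) |>.add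
      (hlog.inv_tendsto_atTop.const_mul 2)
  calc (∫ g in Ioi (0 : ℝ), (g + 1) * (kfun' j g) ^ 2) ≤ G 0 - 0 :=
        integral_Ioi_le_of_le_neg_deriv hG hGlim (fun g (hg : 0 < g) => by positivity)
          fun g (hg : 0 < g) => (mul_sq_kfun'_le hj hg.le).trans_eq (by ring)
    _ = 4 / L := by
      simp only [G, zero_add, log_one, sub_zero, show log (1 + r) = L from rfl]
      field_simp
      ring
    _ ≤ 5 / L := by gcongr; norm_num
end
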